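/- arXiv:1312.7360 — 3 statements merged into one kernel-verified Lean document; each statement's English description precedes it below -/
import Mathlib

section
/- Let T>0, n∈ℕ, λ>0, γ≥0, σ≥0, let α₁,…,αₙ≥0, let b:[0,T]→ℝ be continuous, and let x₁,…,xₙ∈ℝ. Then there exists a unique n-tuple of C² functions X₁,…,Xₙ:[0,T]→ℝ satisfying the coupled system of second-order linear ODEs αᵢσ²Xᵢ(t) − 2λẌᵢ(t) = b(t) + γ·Σ_{j≠i} Ẋⱼ(t) + λ·Σ_{j≠i} Ẍⱼ(t) for all t∈[0,T] and all i=1,…,n, together with the two-point boundary conditions Xᵢ(0)=xᵢ and Xᵢ(T)=0 for every i. -/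
open Set

/-- The coupled system of Euler–Lagrange equations with two-point boundary
conditions characterizing the `n`-player Nash equilibrium: each `X i` is C²,
satisfies `αᵢσ²Xᵢ(t) − 2λẌᵢ(t) = b(t) + γ·Σ_{j≠i} Ẋⱼ(t) + λ·Σ_{j≠i} Ẍⱼ(t)`
on `[0,T]`, and `Xᵢ(0) = xᵢ`, `Xᵢ(T) = 0`. -/
def SolvesNashSystem (T lam gam sig : ℝ) (n : ℕ) (α : Fin n → ℝ) (b : ℝ → ℝ)
    (x : Fin n → ℝ) (X : Fin n → ℝ → ℝ) : Prop :=
  (∀ i, ContDiff ℝ 2 (X i)) ∧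
  (∀ i, ∀ t ∈ Icc (0 : ℝ) T,
    α i * sig ^ 2 * X i t - 2 * lam * deriv (deriv (X i)) t
      = b t + gam * ∑ j ∈ Finset.univ.erase i, deriv (X j) t
        + lam * ∑ j ∈ Finset.univ.erase i, deriv (deriv (X j)) t) ∧
  (∀ i, X i 0 = x i ∧ X i T = 0)

open NormedSpace

noncomputable section NashAux

abbrev Evec (n : ℕ) := (Fin n → ℝ) × (Fin n → ℝ)

variable {n : ℕ} (lam gam sig : ℝ) (α : Fin n → ℝ)

/-- inverse of the map `w ↦ lam • (w + (∑ w) • 1)` as a linear map -/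
def nLinv : (Fin n → ℝ) →ₗ[ℝ] (Fin n → ℝ) where
  toFun u := fun i => lam⁻¹ * (u i - (∑ j, u j) / (n + 1))
  map_add' u v := by
    funext i
    simp only [Pi.add_apply, Finset.sum_add_distrib]
    ring
  map_smul' c u := by
    funext i
    simp only [Pi.smul_apply, smul_eq_mul, RingHom.id_apply, ← Finset.mul_sum]
    ring

theorem nLinv_L (hlam : lam ≠ 0) (u : Fin n → ℝ) (i : Fin n) :
    lam * ((∑ j, nLinv lam u j) + nLinv lam u i) = u i := by
  have hn : ((n : ℝ) + 1) ≠ 0 := by positivity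
  have hsum : (∑ j, nLinv lam u j) = lam⁻¹ * ((∑ j, u j) / (n + 1)) := by
    show (∑ j, lam⁻¹ * (u j - (∑ k, u k) / (n + 1))) = _
    rw [← Finset.mul_sum]
    congr 1
    rw [Finset.sum_sub_distrib, Finset.sum_const, Finset.card_univ, Fintype.card_fin]
    rw [nsmul_eq_mul, eq_div_iff hn]
    field_simp
    ring
  rw [hsum]
  show lam * (lam⁻¹ * ((∑ j, u j) / (↑n + 1)) + lam⁻¹ * (u i - (∑ j, u j) / (↑n + 1))) = u i
  field_simp
  ring

/-- the `p ↦ (fun i => α i σ² p.1 i − γ(∑ p.2 − p.2 i))` map -/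
def nB : Evec n →ₗ[ℝ] (Fin n → ℝ) where
  toFun p := fun i => α i * sig ^ 2 * p.1 i - gam * ((∑ j, p.2 j) - p.2 i)
  map_add' p q := by
    funext i
    simp only [Prod.fst_add, Prod.snd_add, Pi.add_apply, Finset.sum_add_distrib]
    ring
  map_smul' c p := by
    funext i
    simp only [Prod.smul_fst, Prod.smul_snd, Pi.smul_apply, smul_eq_mul, RingHom.id_apply,
      ← Finset.mul_sum]
    ring

/-- The linear map of the first-order system. -/
def nA : Evec n →ₗ[ℝ] Evec n :=
  LinearMap.prod ((LinearMap.snd ℝ _ _)) ((nLinv lam).comp (nB gam sig α))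

/-- as a continuous linear map -/
def nAc : Evec n →L[ℝ] Evec n := (nA lam gam sig α).toContinuousLinearMap

variable (bt : ℝ → ℝ)

/-- the inhomogeneity of the first-order system -/
def ng (s : ℝ) : Evec n := (0, (-bt s) • (nLinv lam) (fun _ => (1:ℝ)))

theorem ng_cont (hbt : Continuous bt) : Continuous (ng (n := n) lam bt) :=
  continuous_const.prodMk ((hbt.neg).smul continuous_const)

/-- integral term -/
def nh (t : ℝ) : Evec n := ∫ s in (0:ℝ)..t, exp (-(s • nAc lam gam sig α)) (ng lam bt s)

/-- the flow of the inhomogeneous first-order linear system -/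
def nsol (y₀ : Evec n) (t : ℝ) : Evec n :=
  exp (t • nAc lam gam sig α) (y₀ + nh lam gam sig α bt t)

instance nRatAlg : NormedAlgebra ℚ (Evec n →L[ℝ] Evec n) :=
  NormedAlgebra.restrictScalars ℚ ℝ _

theorem nF_cont (hbt : Continuous bt) :
    Continuous (fun s => exp (-(s • nAc lam gam sig α)) (ng lam bt s)) :=
  ((exp_continuous.comp ((continuous_id.smul continuous_const).neg))).clm_apply
    (ng_cont lam bt hbt)

theorem nsol_zero (y₀ : Evec n) : nsol lam gam sig α bt y₀ 0 = y₀ := by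
  simp [nsol, nh, zero_smul, exp_zero]

theorem nsol_hasDerivAt (hbt : Continuous bt) (y₀ : Evec n) (t : ℝ) :
    HasDerivAt (nsol lam gam sig α bt y₀)
      (nAc lam gam sig α (nsol lam gam sig α bt y₀ t) + ng lam bt t) t := by
  set A := nAc lam gam sig α with hA
  have e1 : HasDerivAt (fun u : ℝ => exp (u • A)) (exp (t • A) * A) t :=
    hasDerivAt_exp_smul_const A t
  have e2 : HasDerivAt (nh lam gam sig α bt) (exp (-(t • A)) (ng lam bt t)) t := by
    apply intervalIntegral.integral_hasDerivAt_right
      ((nF_cont lam gam sig α bt hbt).intervalIntegrable _ _)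
      ((nF_cont lam gam sig α bt hbt).stronglyMeasurable.stronglyMeasurableAtFilter)
      (nF_cont lam gam sig α bt hbt).continuousAt
  have e3 := e1.clm_apply (e2.const_add y₀)
  have comm : Commute A (exp (t • A)) := ((Commute.refl A).smul_right t).exp_right
  have key : exp (t • A) * A = A * exp (t • A) := comm.symm
  have inv1 : exp (t • A) * exp (-(t • A)) = 1 := by
    rw [← exp_add_of_commute (x := t • A) (y := -(t • A)) (by exact (Commute.refl (t • A)).neg_right),
      add_neg_cancel, exp_zero]
  refine e3.congr_deriv (Eq.symm ?_)
  rw [key]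
  have : (A * exp (t • A)) (y₀ + nh lam gam sig α bt t)
      = A (nsol lam gam sig α bt y₀ t) := rfl
  rw [this]
  congr 1
  calc ng lam bt t = (1 : Evec n →L[ℝ] Evec n) (ng lam bt t) := rfl
    _ = (exp (t • A) * exp (-(t • A))) (ng lam bt t) := by rw [inv1]
    _ = exp (t • A) (exp (-(t • A)) (ng lam bt t)) := rfl

/-- first (position) component of the flow -/
def nX (y₀ : Evec n) (i : Fin n) (t : ℝ) : ℝ := (nsol lam gam sig α bt y₀ t).1 i

/-- second (velocity) component of the flow -/
def nV (y₀ : Evec n) (i : Fin n) (t : ℝ) : ℝ := (nsol lam gam sig α bt y₀ t).2 i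

/-- acceleration component -/
def nW (y₀ : Evec n) (i : Fin n) (t : ℝ) : ℝ :=
  (nAc lam gam sig α (nsol lam gam sig α bt y₀ t) + ng lam bt t).2 i

theorem nAc_apply (y : Evec n) :
    nAc lam gam sig α y = (y.2, nLinv lam (nB gam sig α y)) := by
  simp [nAc, nA]

theorem nX_hasDerivAt (hbt : Continuous bt) (y₀ : Evec n) (i : Fin n) (t : ℝ) :
    HasDerivAt (nX lam gam sig α bt y₀ i) (nV lam gam sig α bt y₀ i t) t := by
  have c : Evec n →L[ℝ] ℝ :=
    (ContinuousLinearMap.proj i).comp (ContinuousLinearMap.fst ℝ _ _)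
  have h := ((((ContinuousLinearMap.proj i).comp
      (ContinuousLinearMap.fst ℝ (Fin n → ℝ) (Fin n → ℝ))).hasFDerivAt).comp_hasDerivAt t
    (nsol_hasDerivAt lam gam sig α bt hbt y₀ t))
  refine h.congr_deriv (Eq.symm ?_)
  rw [nAc_apply]
  simp [nV, ng]

theorem nV_hasDerivAt (hbt : Continuous bt) (y₀ : Evec n) (i : Fin n) (t : ℝ) :
    HasDerivAt (nV lam gam sig α bt y₀ i) (nW lam gam sig α bt y₀ i t) t := by
  have h := ((((ContinuousLinearMap.proj i).comp
      (ContinuousLinearMap.snd ℝ (Fin n → ℝ) (Fin n → ℝ))).hasFDerivAt).comp_hasDerivAt t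
    (nsol_hasDerivAt lam gam sig α bt hbt y₀ t))
  exact h

theorem nX_deriv (hbt : Continuous bt) (y₀ : Evec n) (i : Fin n) :
    deriv (nX lam gam sig α bt y₀ i) = nV lam gam sig α bt y₀ i := by
  funext t; exact (nX_hasDerivAt lam gam sig α bt hbt y₀ i t).deriv

theorem nV_deriv (hbt : Continuous bt) (y₀ : Evec n) (i : Fin n) :
    deriv (nV lam gam sig α bt y₀ i) = nW lam gam sig α bt y₀ i := by
  funext t; exact (nV_hasDerivAt lam gam sig α bt hbt y₀ i t).deriv

theorem nsol_cont (hbt : Continuous bt) (y₀ : Evec n) :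
    Continuous (nsol lam gam sig α bt y₀) := by
  have : Differentiable ℝ (nsol lam gam sig α bt y₀) :=
    fun t => (nsol_hasDerivAt lam gam sig α bt hbt y₀ t).differentiableAt
  exact this.continuous

theorem nW_cont (hbt : Continuous bt) (y₀ : Evec n) (i : Fin n) :
    Continuous (nW lam gam sig α bt y₀ i) := by
  apply Continuous.comp (continuous_apply i)
  exact (continuous_snd.comp
    (((nAc lam gam sig α).continuous.comp (nsol_cont lam gam sig α bt hbt y₀)).add
      (ng_cont lam bt hbt)))

theorem nX_contDiff (hbt : Continuous bt) (y₀ : Evec n) (i : Fin n) :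
    ContDiff ℝ 2 (nX lam gam sig α bt y₀ i) := by
  rw [show (2 : WithTop ℕ∞) = 1 + 1 by norm_num, contDiff_succ_iff_deriv]
  refine ⟨fun t => (nX_hasDerivAt lam gam sig α bt hbt y₀ i t).differentiableAt, by simp, ?_⟩
  rw [nX_deriv lam gam sig α bt hbt y₀ i, contDiff_one_iff_deriv]
  exact ⟨fun t => (nV_hasDerivAt lam gam sig α bt hbt y₀ i t).differentiableAt,
    by rw [nV_deriv lam gam sig α bt hbt y₀ i]; exact nW_cont lam gam sig α bt hbt y₀ i⟩

theorem nX_zero (y₀ : Evec n) (i : Fin n) : nX lam gam sig α bt y₀ i 0 = y₀.1 i := by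
  simp [nX, nsol_zero]

theorem nV_zero (y₀ : Evec n) (i : Fin n) : nV lam gam sig α bt y₀ i 0 = y₀.2 i := by
  simp [nV, nsol_zero]

theorem nsol_equation (hlam : lam ≠ 0) (y₀ : Evec n) (i : Fin n) (t : ℝ) :
    α i * sig ^ 2 * nX lam gam sig α bt y₀ i t - 2 * lam * nW lam gam sig α bt y₀ i t
      = bt t + gam * ∑ j ∈ Finset.univ.erase i, nV lam gam sig α bt y₀ j t
        + lam * ∑ j ∈ Finset.univ.erase i, nW lam gam sig α bt y₀ j t := by
  set y := nsol lam gam sig α bt y₀ t with hy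
  set w : Fin n → ℝ := nLinv lam (fun k => nB gam sig α y k - bt t) with hwdef
  have hW : ∀ j, nW lam gam sig α bt y₀ j t = w j := by
    intro j
    have h2 : (ng (n := n) lam bt t).2 = nLinv lam (fun _ => -bt t) := by
      rw [show (fun _ : Fin n => -bt t) = (-bt t) • (fun _ : Fin n => (1:ℝ)) from
        by funext k; simp, map_smul]
      rfl
    have h3 : (nAc lam gam sig α y).2 = nLinv lam (nB gam sig α y) := by rw [nAc_apply]
    show (nAc lam gam sig α y + ng lam bt t).2 j = _
    rw [Prod.snd_add, h3, h2, ← map_add, hwdef]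
    exact congrFun (congrArg _ (funext fun k => (sub_eq_add_neg ((nB gam sig α) y k) (bt t)).symm)) j
  have key := nLinv_L lam hlam (fun k => nB gam sig α y k - bt t) i
  simp only [← hwdef] at key
  have hsub : ∀ f : Fin n → ℝ, ∑ j ∈ Finset.univ.erase i, f j = (∑ j, f j) - f i :=
    fun f => eq_sub_of_add_eq (Finset.sum_erase_add _ _ (Finset.mem_univ i))
  have hBi : nB gam sig α y i = α i * sig ^ 2 * y.1 i - gam * ((∑ j, y.2 j) - y.2 i) := rfl
  have hXi : nX lam gam sig α bt y₀ i t = y.1 i := rfl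
  have hVj : ∀ j, nV lam gam sig α bt y₀ j t = y.2 j := fun j => rfl
  simp only [hW, hVj, hXi, hsub] at *
  rw [hBi] at key
  linarith [key]
theorem ng_zero (s : ℝ) : ng (n := n) lam (fun _ => (0:ℝ)) s = 0 := by
  simp [ng]

theorem nh_zero (t : ℝ) : nh lam gam sig α (fun _ => (0:ℝ)) t = 0 := by
  have h : ∀ s : ℝ, exp (-(s • nAc lam gam sig α)) (ng lam (fun _ => (0:ℝ)) s) = 0 :=
    fun s => by rw [ng_zero]; exact map_zero _
  rw [nh]
  simp only [h, intervalIntegral.integral_zero]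

theorem nsol_split (x v : Fin n → ℝ) (t : ℝ) :
    nsol lam gam sig α bt (x, v) t
      = nsol lam gam sig α bt (x, 0) t + exp (t • nAc lam gam sig α) ((0, v) : Evec n) := by
  rw [nsol, nsol, ← map_add]
  congr 1
  have h1 : ((x, v) : Evec n) = ((x, 0) : Evec n) + ((0, v) : Evec n) := by
    ext <;> simp
  rw [h1]
  abel

/-- the end-point map of the homogeneous flow -/
def nPsi (T : ℝ) : (Fin n → ℝ) →ₗ[ℝ] (Fin n → ℝ) where
  toFun v := (exp (T • nAc lam gam sig α) ((0, v) : Evec n)).1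
  map_add' u v := by
    have h1 : ((0, u + v) : Evec n) = ((0, u) : Evec n) + ((0, v) : Evec n) := by
      ext <;> simp
    show (exp (T • nAc lam gam sig α) ((0, u + v) : Evec n)).1 = _
    rw [h1, map_add]
    rfl
  map_smul' c v := by
    have h1 : ((0, c • v) : Evec n) = c • ((0, v) : Evec n) := by
      ext <;> simp
    show (exp (T • nAc lam gam sig α) ((0, c • v) : Evec n)).1 = _
    rw [h1, map_smul]
    rfl

end NashAux

theorem c2_facts {f : ℝ → ℝ} (h : ContDiff ℝ 2 f) :
    Differentiable ℝ f ∧ Differentiable ℝ (deriv f) ∧ Continuous (deriv (deriv f)) := by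
  rw [show (2 : WithTop ℕ∞) = 1 + 1 by norm_num, contDiff_succ_iff_deriv] at h
  obtain ⟨h1, -, h2⟩ := h
  rw [contDiff_one_iff_deriv] at h2
  exact ⟨h1, h2.1, h2.2⟩

theorem nash_unique (T : ℝ) (hT : 0 < T) (n : ℕ) (lam gam sig : ℝ)
    (hlam : 0 < lam) (α : Fin n → ℝ) (hα : ∀ i, 0 ≤ α i)
    (b : ℝ → ℝ) (x : Fin n → ℝ) (X Y : Fin n → ℝ → ℝ)
    (hX : SolvesNashSystem T lam gam sig n α b x X)
    (hY : SolvesNashSystem T lam gam sig n α b x Y) :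
    ∀ i, EqOn (X i) (Y i) (Icc 0 T) := by
  obtain ⟨hXc, hXeq, hXb⟩ := hX
  obtain ⟨hYc, hYeq, hYb⟩ := hY
  -- difference and its derivatives
  set Z : Fin n → ℝ → ℝ := fun i t => X i t - Y i t with hZdef
  set P : Fin n → ℝ → ℝ := fun i t => deriv (X i) t - deriv (Y i) t with hPdef
  set Q : Fin n → ℝ → ℝ := fun i t => deriv (deriv (X i)) t - deriv (deriv (Y i)) t with hQdef
  have hXf := fun i => c2_facts (hXc i)
  have hYf := fun i => c2_facts (hYc i)
  have hZ' : ∀ i t, HasDerivAt (Z i) (P i t) t := fun i t =>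
    (((hXf i).1 t).hasDerivAt).sub (((hYf i).1 t).hasDerivAt)
  have hP' : ∀ i t, HasDerivAt (P i) (Q i t) t := fun i t =>
    (((hXf i).2.1 t).hasDerivAt).sub (((hYf i).2.1 t).hasDerivAt)
  have hPc : ∀ i, Continuous (P i) := fun i =>
    Differentiable.continuous (fun t => (hP' i t).differentiableAt)
  -- subtracted equation
  have hsub : ∀ (f : Fin n → ℝ) (i : Fin n),
      ∑ j ∈ Finset.univ.erase i, f j = (∑ j, f j) - f i :=
    fun f i => eq_sub_of_add_eq (Finset.sum_erase_add _ _ (Finset.mem_univ i))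
  have hZeq : ∀ (i : Fin n), ∀ t ∈ Icc (0:ℝ) T,
      lam * (Q i t + ∑ j, Q j t)
        = α i * sig ^ 2 * Z i t - gam * ((∑ j, P j t) - P i t) := by
    intro i t ht
    have e1 := hXeq i t ht
    have e2 := hYeq i t ht
    rw [hsub] at e1 e2
    rw [hsub] at e1 e2
    have hQsum : ∑ j, Q j t = (∑ j, deriv (deriv (X j)) t) - ∑ j, deriv (deriv (Y j)) t := by
      rw [hQdef, ← Finset.sum_sub_distrib]
    have hPsum : ∑ j, P j t = (∑ j, deriv (X j) t) - ∑ j, deriv (Y j) t := by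
      rw [hPdef, ← Finset.sum_sub_distrib]
    simp only [hZdef, hPdef, hQdef, hQsum, hPsum]
    ring_nf
    ring_nf at e1 e2
    simp only [Finset.sum_sub_distrib]
    linarith [e1, e2]
  -- the Lyapunov function and its derivative
  set SZ : ℝ → ℝ := fun t => ∑ i, Z i t with hSZdef
  set SP : ℝ → ℝ := fun t => ∑ i, P i t with hSPdef
  set SQ : ℝ → ℝ := fun t => ∑ i, Q i t with hSQdef
  set W : ℝ → ℝ := fun t =>
    lam * ((∑ i, Z i t * P i t) + SZ t * SP t)
      + gam / 2 * (SZ t * SZ t - ∑ i, Z i t * Z i t) with hWdef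
  set E : ℝ → ℝ := fun t =>
    lam * ((∑ i, (P i t * P i t + Z i t * Q i t)) + (SP t * SP t + SZ t * SQ t))
      + gam / 2 * ((SP t * SZ t + SZ t * SP t) - ∑ i, (P i t * Z i t + Z i t * P i t))
      with hEdef
  have hSZ' : ∀ t, HasDerivAt SZ (SP t) t := fun t => HasDerivAt.fun_sum fun i _ => hZ' i t
  have hSP' : ∀ t, HasDerivAt SP (SQ t) t := fun t => HasDerivAt.fun_sum fun i _ => hP' i t
  have hW' : ∀ t, HasDerivAt W (E t) t := by
    intro t
    have d1 : HasDerivAt (fun t => ∑ i, Z i t * P i t)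
        (∑ i, (P i t * P i t + Z i t * Q i t)) t :=
      HasDerivAt.fun_sum fun i _ => (hZ' i t).mul (hP' i t)
    have d4 : HasDerivAt (fun t => ∑ i, Z i t * Z i t)
        (∑ i, (P i t * Z i t + Z i t * P i t)) t :=
      HasDerivAt.fun_sum fun i _ => (hZ' i t).mul (hZ' i t)
    exact ((d1.add ((hSZ' t).mul (hSP' t))).const_mul lam).add
      ((((hSZ' t).mul (hSZ' t)).sub d4).const_mul (gam / 2))
  -- the derivative is a sum of squares on [0, T]
  have keyE : ∀ t ∈ Icc (0:ℝ) T, E t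
      = lam * (∑ i, P i t * P i t) + lam * (SP t * SP t)
        + ∑ i, α i * sig ^ 2 * (Z i t * Z i t) := by
    intro t ht
    have h1 : ∑ i, Z i t * (lam * (Q i t + SQ t))
        = ∑ i, Z i t * (α i * sig ^ 2 * Z i t - gam * (SP t - P i t)) :=
      Finset.sum_congr rfl fun i _ => by rw [hZeq i t ht]
    have hL : ∑ i, Z i t * (lam * (Q i t + SQ t))
        = lam * (∑ i, Z i t * Q i t) + lam * SQ t * SZ t := by
      calc ∑ i, Z i t * (lam * (Q i t + SQ t))
          = ∑ i, (lam * (Z i t * Q i t) + (lam * SQ t) * Z i t) :=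
            Finset.sum_congr rfl fun i _ => by ring
        _ = lam * (∑ i, Z i t * Q i t) + lam * SQ t * SZ t := by
            rw [Finset.sum_add_distrib, ← Finset.mul_sum, ← Finset.mul_sum, hSZdef]
    have hR : ∑ i, Z i t * (α i * sig ^ 2 * Z i t - gam * (SP t - P i t))
        = (∑ i, α i * sig ^ 2 * (Z i t * Z i t)) - gam * SP t * SZ t
          + gam * ∑ i, Z i t * P i t := by
      calc ∑ i, Z i t * (α i * sig ^ 2 * Z i t - gam * (SP t - P i t))
          = ∑ i, (α i * sig ^ 2 * (Z i t * Z i t) - (gam * SP t) * Z i t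
              + gam * (Z i t * P i t)) := Finset.sum_congr rfl fun i _ => by ring
        _ = _ := by
            rw [Finset.sum_add_distrib, Finset.sum_sub_distrib, ← Finset.mul_sum,
              ← Finset.mul_sum, hSZdef]
    have hE1 : ∑ i, (P i t * P i t + Z i t * Q i t)
        = (∑ i, P i t * P i t) + ∑ i, Z i t * Q i t := Finset.sum_add_distrib
    have hE2 : ∑ i, (P i t * Z i t + Z i t * P i t)
        = (∑ i, P i t * Z i t) + ∑ i, Z i t * P i t := Finset.sum_add_distrib
    have hc : ∑ i, P i t * Z i t = ∑ i, Z i t * P i t :=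
      Finset.sum_congr rfl fun i _ => mul_comm _ _
    rw [hEdef]
    simp only [hE1, hE2, hc]
    rw [hL] at h1
    rw [hR] at h1
    nlinarith [h1]
  -- boundary values of W vanish
  have hZ0 : ∀ i, Z i 0 = 0 := fun i => by
    simp only [hZdef]; rw [(hXb i).1, (hYb i).1, sub_self]
  have hZT : ∀ i, Z i T = 0 := fun i => by
    simp only [hZdef]; rw [(hXb i).2, (hYb i).2, sub_self]
  have hW0 : W 0 = 0 := by
    rw [hWdef]
    simp only [hSZdef, hZ0, zero_mul, Finset.sum_const_zero, mul_zero, sub_zero]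
    ring
  have hWT : W T = 0 := by
    rw [hWdef]
    simp only [hSZdef, hZT, zero_mul, Finset.sum_const_zero, mul_zero, sub_zero]
    ring
  -- W is monotone with vanishing endpoints, hence zero, hence E = 0
  have hEnn : ∀ t ∈ Icc (0:ℝ) T, 0 ≤ E t := by
    intro t ht
    rw [keyE t ht]
    have n1 : (0:ℝ) ≤ lam * ∑ i, P i t * P i t :=
      mul_nonneg hlam.le (Finset.sum_nonneg fun i _ => mul_self_nonneg _)
    have n2 : (0:ℝ) ≤ lam * (SP t * SP t) := mul_nonneg hlam.le (mul_self_nonneg _)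
    have n3 : (0:ℝ) ≤ ∑ i, α i * sig ^ 2 * (Z i t * Z i t) :=
      Finset.sum_nonneg fun i _ =>
        mul_nonneg (mul_nonneg (hα i) (sq_nonneg sig)) (mul_self_nonneg _)
    linarith
  have hmono : MonotoneOn W (Icc 0 T) := by
    apply monotoneOn_of_deriv_nonneg (convex_Icc 0 T)
    · exact (Differentiable.continuous fun t => (hW' t).differentiableAt).continuousOn
    · exact fun t _ => (hW' t).differentiableAt.differentiableWithinAt
    · intro t ht
      rw [interior_Icc] at ht
      rw [(hW' t).deriv]
      exact hEnn t (Ioo_subset_Icc_self ht)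
  have hWzero : ∀ t ∈ Icc (0:ℝ) T, W t = 0 := by
    intro t ht
    have l1 : W t ≤ W T := hmono ht (right_mem_Icc.2 hT.le) ht.2
    have l2 : W 0 ≤ W t := hmono (left_mem_Icc.2 hT.le) ht ht.1
    rw [hW0] at l2; rw [hWT] at l1; linarith
  have hE0 : ∀ t ∈ Ioo (0:ℝ) T, E t = 0 := by
    intro t ht
    have hev : W =ᶠ[nhds t] fun _ => (0:ℝ) :=
      Filter.eventuallyEq_of_mem (Ioo_mem_nhds ht.1 ht.2)
        fun s hs => hWzero s (Ioo_subset_Icc_self hs)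
    have := hev.deriv_eq
    rw [deriv_const] at this
    rw [← (hW' t).deriv]
    exact this
  -- hence all velocities of the difference vanish on [0, T]
  have hP0 : ∀ i, ∀ t ∈ Icc (0:ℝ) T, P i t = 0 := by
    have hIoo : ∀ i, ∀ t ∈ Ioo (0:ℝ) T, P i t = 0 := by
      intro i t ht
      have hk := keyE t (Ioo_subset_Icc_self ht)
      rw [hE0 t ht] at hk
      have n1 : (0:ℝ) ≤ ∑ i, P i t * P i t :=
        Finset.sum_nonneg fun i _ => mul_self_nonneg _
      have n2 : (0:ℝ) ≤ SP t * SP t := mul_self_nonneg _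
      have n3 : (0:ℝ) ≤ ∑ i, α i * sig ^ 2 * (Z i t * Z i t) :=
        Finset.sum_nonneg fun i _ =>
          mul_nonneg (mul_nonneg (hα i) (sq_nonneg sig)) (mul_self_nonneg _)
      have hPP : ∑ i, P i t * P i t = 0 := by nlinarith
      have := (Finset.sum_eq_zero_iff_of_nonneg
        (fun i _ => mul_self_nonneg (P i t))).1 hPP i (Finset.mem_univ i)
      exact mul_self_eq_zero.1 this
    intro i
    have hcl : EqOn (P i) (fun _ => (0:ℝ)) (closure (Ioo (0:ℝ) T)) :=
      Set.EqOn.closure (fun t ht => hIoo i t ht) (hPc i) continuous_const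
    rw [closure_Ioo hT.ne] at hcl
    exact fun t ht => hcl ht
  -- hence the difference is constant, i.e. zero, on [0, T]
  intro i t ht
  have hdiff : DifferentiableOn ℝ (Z i) (Icc 0 T) :=
    (Differentiable.differentiableOn fun s => (hZ' i s).differentiableAt)
  have hderiv : ∀ s ∈ Ico (0:ℝ) T, derivWithin (Z i) (Icc 0 T) s = 0 := by
    intro s hs
    rw [((hZ' i s).hasDerivWithinAt).derivWithin
      ((uniqueDiffOn_Icc hT) s (Ico_subset_Icc_self hs))]
    exact hP0 i s (Ico_subset_Icc_self hs)
  have hconst := constant_of_derivWithin_zero hdiff hderiv t ht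
  rw [hZ0 i] at hconst
  have : X i t - Y i t = 0 := hconst
  exact sub_eq_zero.1 this

/-- existence and uniqueness of the solution of the coupled
two-point boundary value system characterizing the Nash equilibrium. -/
theorem stmt_0 (T : ℝ) (hT : 0 < T) (n : ℕ) (lam gam sig : ℝ)
    (hlam : 0 < lam) (hgam : 0 ≤ gam) (hsig : 0 ≤ sig)
    (α : Fin n → ℝ) (hα : ∀ i, 0 ≤ α i)
    (b : ℝ → ℝ) (hb : ContinuousOn b (Icc 0 T))
    (x : Fin n → ℝ) :
    (∃ X : Fin n → ℝ → ℝ, SolvesNashSystem T lam gam sig n α b x X) ∧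
    (∀ X Y : Fin n → ℝ → ℝ, SolvesNashSystem T lam gam sig n α b x X →
      SolvesNashSystem T lam gam sig n α b x Y →
      ∀ i, EqOn (X i) (Y i) (Icc 0 T)) := by
  constructor
  · -- existence
    set bt : ℝ → ℝ := fun t => b (max 0 (min T t)) with hbtdef
    have hbt : Continuous bt := by
      apply hb.comp_continuous (continuous_const.max (continuous_const.min continuous_id))
      intro t
      exact ⟨le_max_left _ _, max_le hT.le (min_le_left _ _)⟩
    have hbtt : ∀ t ∈ Icc (0:ℝ) T, bt t = b t := by
      intro t ht
      rw [hbtdef]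
      simp only
      rw [min_eq_right ht.2, max_eq_right ht.1]
    -- injectivity of the end-point map of the homogeneous flow
    have hinj : Function.Injective (nPsi (n := n) lam gam sig α T) := by
      rw [injective_iff_map_eq_zero]
      intro v hv
      set Z : Fin n → ℝ → ℝ := nX lam gam sig α (fun _ => 0) ((0, v) : Evec n) with hZdef
      have hd1 : ∀ j, deriv (Z j) = nV lam gam sig α (fun _ => 0) ((0, v) : Evec n) j :=
        fun j => nX_deriv lam gam sig α (fun _ => 0) continuous_const _ j
      have hd2 : ∀ j, deriv (nV lam gam sig α (fun _ => 0) ((0, v) : Evec n) j)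
          = nW lam gam sig α (fun _ => 0) ((0, v) : Evec n) j :=
        fun j => nV_deriv lam gam sig α (fun _ => 0) continuous_const _ j
      have hZsolves : SolvesNashSystem T lam gam sig n α (fun _ => 0) (fun _ => 0) Z := by
        refine ⟨fun i => nX_contDiff lam gam sig α (fun _ => 0) continuous_const _ i,
          ?_, fun i => ⟨nX_zero lam gam sig α (fun _ => 0) _ i, ?_⟩⟩
        · intro i t ht
          simp only [hd1, hd2]
          exact nsol_equation lam gam sig α (fun _ => 0) hlam.ne' _ i t
        · show nX lam gam sig α (fun _ => 0) ((0, v) : Evec n) i T = 0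
          have h1 : nX lam gam sig α (fun _ => 0) ((0, v) : Evec n) i T
              = nPsi (n := n) lam gam sig α T v i := by
            rw [nX, nsol, nh_zero, add_zero]
            rfl
          rw [h1, hv]
          rfl
      have hzero : SolvesNashSystem T lam gam sig n α (fun _ => 0) (fun _ => 0)
          (fun _ _ => 0) := by
        refine ⟨fun i => contDiff_const, ?_, fun i => ⟨rfl, rfl⟩⟩
        intro i t ht
        simp [deriv_const']
      have heq := nash_unique T hT n lam gam sig hlam α hα (fun _ => 0) (fun _ => 0)
        Z (fun _ _ => 0) hZsolves hzero
      funext i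
      have h1 : HasDerivWithinAt (Z i) (v i) (Icc 0 T) 0 := by
        have h := nX_hasDerivAt lam gam sig α (fun _ => 0) continuous_const
          ((0, v) : Evec n) i 0
        rw [nV_zero] at h
        exact h.hasDerivWithinAt
      have h2 : HasDerivWithinAt (Z i) 0 (Icc 0 T) 0 := by
        apply (hasDerivWithinAt_const (0:ℝ) (Icc (0:ℝ) T) (0:ℝ)).congr
        · exact fun s hs => heq i hs
        · exact heq i (left_mem_Icc.2 hT.le)
      have hu := (uniqueDiffOn_Icc hT) 0 (left_mem_Icc.2 hT.le)
      have e1 := h1.derivWithin hu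
      have e2 := h2.derivWithin hu
      rw [e2] at e1
      exact e1.symm
    obtain ⟨v, hv⟩ := (LinearMap.injective_iff_surjective.1 hinj)
      (fun i => -(nsol lam gam sig α bt (x, 0) T).1 i)
    refine ⟨nX lam gam sig α bt ((x, v) : Evec n), ?_, ?_, ?_⟩
    · exact fun i => nX_contDiff lam gam sig α bt hbt _ i
    · intro i t ht
      have hd1 : ∀ j, deriv (nX lam gam sig α bt ((x, v) : Evec n) j)
          = nV lam gam sig α bt ((x, v) : Evec n) j :=
        fun j => nX_deriv lam gam sig α bt hbt _ j
      have hd2 : ∀ j, deriv (nV lam gam sig α bt ((x, v) : Evec n) j)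
          = nW lam gam sig α bt ((x, v) : Evec n) j :=
        fun j => nV_deriv lam gam sig α bt hbt _ j
      rw [← hbtt t ht]
      simp only [hd1, hd2]
      exact nsol_equation lam gam sig α bt hlam.ne' _ i t
    · intro i
      refine ⟨nX_zero lam gam sig α bt _ i, ?_⟩
      show (nsol lam gam sig α bt ((x, v) : Evec n) T).1 i = 0
      rw [nsol_split lam gam sig α bt x v T]
      have h2 : nPsi (n := n) lam gam sig α T v i
          = -(nsol lam gam sig α bt (x, 0) T).1 i := congrFun hv i
      show (nsol lam gam sig α bt (x, 0) T).1 i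
          + (exp (T • nAc lam gam sig α) ((0, v) : Evec n)).1 i = 0
      have h3 : (exp (T • nAc lam gam sig α) ((0, v) : Evec n)).1 i
          = nPsi (n := n) lam gam sig α T v i := rfl
      rw [h3, h2]
      ring
  · -- uniqueness
    exact fun X Y hX hY => nash_unique T hT n lam gam sig hlam α hα b x X Y hX hY
end

section
/- Let T>0, n∈ℕ, λ>0, γ≥0, σ≥0, α≥0, let b:[0,T]→ℝ be continuous, let x₁,…,xₙ∈ℝ, and suppose the C² functions X₁,…,Xₙ:[0,T]→ℝ satisfy ασ²Xᵢ(t) − 2λẌᵢ(t) = b(t) + γ·Σ_{j≠i} Ẋⱼ(t) + λ·Σ_{j≠i} Ẍⱼ(t) with Xᵢ(0)=xᵢ, Xᵢ(T)=0 for all i. Then Σ(t) := Σ_{i=1}ⁿ Xᵢ(t) solves the scalar two-point boundary value problem ασ²Σ(t) − (n−1)γΣ̇(t) − (n+1)λΣ̈(t) = n·b(t), Σ(0)=Σ_{i=1}ⁿ xᵢ, Σ(T)=0, and each Xᵢ solves the scalar two-point boundary value problem ασ²Xᵢ(t) + γẊᵢ(t) − λẌᵢ(t) = b(t) + γΣ̇(t)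 + λΣ̈(t), Xᵢ(0)=xᵢ, Xᵢ(T)=0. -/
open Set

/-- if the C² functions `X₁,…,Xₙ` solve the coupled Nash
equilibrium system with common risk aversion `α`, then the aggregate
`Σ = Σᵢ Xᵢ` solves the decoupled scalar two-point boundary value problem, and
each `Xᵢ` solves a scalar two-point boundary value problem driven by `Σ`. -/
theorem stmt_3 (T : ℝ) (hT : 0 < T) (n : ℕ) (lam gam sig al : ℝ)
    (hlam : 0 < lam) (hgam : 0 ≤ gam) (hsig : 0 ≤ sig) (hal : 0 ≤ al)
    (b : ℝ → ℝ) (hb : ContinuousOn b (Icc 0 T))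
    (x : Fin n → ℝ) (X : Fin n → ℝ → ℝ)
    (hC2 : ∀ i, ContDiff ℝ 2 (X i))
    (hODE : ∀ i, ∀ t ∈ Icc (0 : ℝ) T,
      al * sig ^ 2 * X i t - 2 * lam * deriv (deriv (X i)) t
        = b t + gam * ∑ j ∈ Finset.univ.erase i, deriv (X j) t
          + lam * ∑ j ∈ Finset.univ.erase i, deriv (deriv (X j)) t)
    (hBC : ∀ i, X i 0 = x i ∧ X i T = 0) :
    (∀ t ∈ Icc (0 : ℝ) T,
      al * sig ^ 2 * (∑ i, X i t)
        - ((n : ℝ) - 1) * gam * deriv (fun s => ∑ i, X i s) t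
        - ((n : ℝ) + 1) * lam * deriv (deriv (fun s => ∑ i, X i s)) t
        = (n : ℝ) * b t) ∧
    (∑ i, X i 0) = ∑ i, x i ∧ (∑ i, X i T) = 0 ∧
    (∀ i, (∀ t ∈ Icc (0 : ℝ) T,
      al * sig ^ 2 * X i t + gam * deriv (X i) t - lam * deriv (deriv (X i)) t
        = b t + gam * deriv (fun s => ∑ j, X j s) t
          + lam * deriv (deriv (fun s => ∑ j, X j s)) t) ∧
      X i 0 = x i ∧ X i T = 0) := by
 
  have hd : ∀ i, Differentiable ℝ (X i) := fun i => (hC2 i).differentiable (by norm_num)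
  have hc1 : ∀ i, ContDiff ℝ 1 (deriv (X i)) := by
    intro i
    have h2 : ContDiff ℝ ((1 : WithTop ℕ∞) + 1) (X i) := by
      rw [show (1 : WithTop ℕ∞) + 1 = 2 from rfl]; exact hC2 i
    exact (contDiff_succ_iff_deriv.mp h2).2.2
  have hd2 : ∀ i, Differentiable ℝ (deriv (X i)) := fun i => (hc1 i).differentiable (by norm_num)
  have hDS : deriv (fun s => ∑ i, X i s) = fun t => ∑ i, deriv (X i) t := by
    funext t
    exact deriv_fun_sum (fun i _ => (hd i).differentiableAt)
  have hDDS : ∀ t, deriv (deriv (fun s => ∑ i, X i s)) t = ∑ i, deriv (deriv (X i)) t := by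
    intro t
    rw [hDS]
    exact deriv_fun_sum (fun i _ => (hd2 i).differentiableAt)
  have hDS' : ∀ t, deriv (fun s => ∑ i, X i s) t = ∑ i, deriv (X i) t := fun t => by rw [hDS]
  have hInd : ∀ i, ∀ t ∈ Icc (0 : ℝ) T,
      al * sig ^ 2 * X i t + gam * deriv (X i) t - lam * deriv (deriv (X i)) t
        = b t + gam * deriv (fun s => ∑ j, X j s) t
          + lam * deriv (deriv (fun s => ∑ j, X j s)) t := by
    intro i t ht
    have h := hODE i t ht
    rw [Finset.sum_erase_eq_sub (Finset.mem_univ i),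
        Finset.sum_erase_eq_sub (Finset.mem_univ i)] at h
    rw [hDS' t, hDDS t]
    linarith
  refine ⟨?_, ?_, ?_, fun i => ⟨hInd i, (hBC i).1, (hBC i).2⟩⟩
  · intro t ht
    have hsum : ∑ i, (al * sig ^ 2 * X i t + gam * deriv (X i) t
          - lam * deriv (deriv (X i)) t)
        = ∑ _i : Fin n, (b t + gam * deriv (fun s => ∑ j, X j s) t
          + lam * deriv (deriv (fun s => ∑ j, X j s)) t) :=
      Finset.sum_congr rfl fun i _ => hInd i t ht
    simp only [Finset.sum_add_distrib, Finset.sum_sub_distrib, ← Finset.mul_sum,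
      Finset.sum_const, Finset.card_univ, Fintype.card_fin, nsmul_eq_mul] at hsum
    rw [hDS' t, hDDS t] at hsum ⊢
    linear_combination hsum
  · exact Finset.sum_congr rfl fun i _ => (hBC i).1
  · simpa using Finset.sum_congr rfl fun i (_ : i ∈ Finset.univ) => (hBC i).2
end

section
/- Let λ>0, γ≥0, σ>0, and let α₁,α₂>0 with α₁≠α₂. Then the quartic polynomial χ(τ) = τ⁴ − (2γ/(3λ))τ³ − ((γ² + 2λσ²(α₁+α₂))/(3λ²))τ² + σ⁴α₁α₂/(3λ²) has exactly two distinct real roots in the open interval (−∞,0). -/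
set_option maxHeartbeats 1000000

/-- Auxiliary: a quartic `τ⁴ - Bτ³ - Cτ² + D` with `B ≥ 0`, `C > 0`, `D > 0`
which is negative at some negative point has exactly two negative roots. -/
lemma quartic_aux (B C D : ℝ) (hB : 0 ≤ B) (hC : 0 < C) (hD : 0 < D)
    (m : ℝ) (hm0 : m < 0) (hfm : m ^ 4 - B * m ^ 3 - C * m ^ 2 + D < 0) :
    ∃ t1 t2 : ℝ, t1 < 0 ∧ t2 < 0 ∧ t1 ≠ t2 ∧
      (t1 ^ 4 - B * t1 ^ 3 - C * t1 ^ 2 + D = 0) ∧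
      (t2 ^ 4 - B * t2 ^ 3 - C * t2 ^ 2 + D = 0) ∧
      (∀ τ : ℝ, τ < 0 → τ ^ 4 - B * τ ^ 3 - C * τ ^ 2 + D = 0 →
        τ = t1 ∨ τ = t2) := by
  set f : ℝ → ℝ := fun τ => τ ^ 4 - B * τ ^ 3 - C * τ ^ 2 + D with hf
  have hfc : Continuous f := by
    rw [hf]; continuity
  have hfmf : f m < 0 := hfm
  have hf0 : 0 < f 0 := by simp [hf, hD]
  -- a point far to the left where f is positive
  set a : ℝ := m - Real.sqrt C - 1 with ha
  have hsC : Real.sqrt C ^ 2 = C := Real.sq_sqrt hC.le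
  have hsCnn : 0 ≤ Real.sqrt C := Real.sqrt_nonneg C
  have haltm : a < m := by rw [ha]; linarith
  have ha0 : a < 0 := haltm.trans hm0
  have ha2 : C < a ^ 2 := by
    have h1 : Real.sqrt C < -a := by rw [ha]; linarith
    calc C = Real.sqrt C ^ 2 := hsC.symm
      _ < (-a) ^ 2 := by
          exact pow_lt_pow_left₀ h1 hsCnn (by norm_num)
      _ = a ^ 2 := by ring
  have hfa : 0 < f a := by
    have h1 : 0 ≤ B * (-a) * a ^ 2 :=
      mul_nonneg (mul_nonneg hB (by linarith)) (sq_nonneg a)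
    have h2 : 0 < a ^ 2 := hC.trans ha2
    have h3 : 0 < a ^ 2 * (a ^ 2 - C) := mul_pos h2 (by linarith)
    show 0 < a ^ 4 - B * a ^ 3 - C * a ^ 2 + D
    nlinarith [h1, h3, hD]
  -- roots by the intermediate value theorem
  obtain ⟨t1, ht1mem, ht1r⟩ : ∃ t1 ∈ Set.Icc a m, f t1 = 0 := by
    have hsub := intermediate_value_Icc' haltm.le hfc.continuousOn
    have h0 : (0 : ℝ) ∈ Set.Icc (f m) (f a) := ⟨hfmf.le, hfa.le⟩
    obtain ⟨t, ht, hft⟩ := hsub h0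
    exact ⟨t, ht, hft⟩
  obtain ⟨t2, ht2mem, ht2r⟩ : ∃ t2 ∈ Set.Icc m 0, f t2 = 0 := by
    have hsub := intermediate_value_Icc hm0.le hfc.continuousOn
    have h0 : (0 : ℝ) ∈ Set.Icc (f m) (f 0) := ⟨hfmf.le, hf0.le⟩
    obtain ⟨t, ht, hft⟩ := hsub h0
    exact ⟨t, ht, hft⟩
  have ht1m : t1 < m := lt_of_le_of_ne ht1mem.2 (by
    intro h; rw [h] at ht1r; linarith)
  have ht2m : m < t2 := lt_of_le_of_ne ht2mem.1 (by
    intro h; rw [h] at hfmf; linarith)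
  have ht20 : t2 < 0 := lt_of_le_of_ne ht2mem.2 (by
    intro h; rw [h] at ht2r; linarith)
  have ht10 : t1 < 0 := ht1m.trans hm0
  -- the critical point
  set d : ℝ := Real.sqrt (9 * B ^ 2 + 32 * C) with hdd
  have hd2 : d ^ 2 = 9 * B ^ 2 + 32 * C := Real.sq_sqrt (by positivity)
  have hdnn : 0 ≤ d := Real.sqrt_nonneg _
  have hd3B : 3 * B < d := by nlinarith [hd2, hdnn, hC, hB]
  set ts : ℝ := (3 * B - d) / 8 with hts
  have hts0 : ts < 0 := by rw [hts]; linarith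
  have hq : 4 * ts ^ 2 - 3 * B * ts - 2 * C = 0 := by
    have : 4 * ts ^ 2 - 3 * B * ts - 2 * C
        = (d ^ 2 - 9 * B ^ 2 - 32 * C) / 16 := by rw [hts]; ring
    rw [this, hd2]; ring
  -- derivative of f
  have hd' : ∀ x : ℝ, HasDerivAt f (4 * x ^ 3 - 3 * B * x ^ 2 - 2 * C * x) x := by
    intro x
    have h := (((hasDerivAt_pow 4 x).sub
        ((hasDerivAt_pow 3 x).const_mul B)).sub
        ((hasDerivAt_pow 2 x).const_mul C)).add_const D
    exact h.congr_deriv (by norm_num; ring)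
  have hderiv : ∀ x : ℝ, deriv f x = 4 * x ^ 3 - 3 * B * x ^ 2 - 2 * C * x :=
    fun x => (hd' x).deriv
  -- strict monotonicity on the two pieces
  have hanti : StrictAntiOn f (Set.Iic ts) := by
    apply strictAntiOn_of_deriv_neg (convex_Iic ts) hfc.continuousOn
    intro x hx
    rw [interior_Iic] at hx
    have hxts : x < ts := hx
    have hx0 : x < 0 := hxts.trans hts0
    rw [hderiv x]
    have hfac : 0 < (ts - x) * (3 * B - 4 * x - 4 * ts) :=
      mul_pos (by linarith) (by linarith)
    have hqx : 0 < 4 * x ^ 2 - 3 * B * x - 2 * C := by nlinarith [hq, hfac]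
    have : 4 * x ^ 3 - 3 * B * x ^ 2 - 2 * C * x
        = x * (4 * x ^ 2 - 3 * B * x - 2 * C) := by ring
    rw [this]
    exact mul_neg_of_neg_of_pos hx0 hqx
  have hmono : StrictMonoOn f (Set.Icc ts 0) := by
    apply strictMonoOn_of_deriv_pos (convex_Icc ts 0) hfc.continuousOn
    intro x hx
    rw [interior_Icc] at hx
    obtain ⟨hx1, hx2⟩ := hx
    rw [hderiv x]
    have hfac : (x - ts) * (4 * x + 4 * ts - 3 * B) < 0 :=
      mul_neg_of_pos_of_neg (by linarith) (by linarith)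
    have hqx : 4 * x ^ 2 - 3 * B * x - 2 * C < 0 := by nlinarith [hq, hfac]
    have : 4 * x ^ 3 - 3 * B * x ^ 2 - 2 * C * x
        = x * (4 * x ^ 2 - 3 * B * x - 2 * C) := by ring
    rw [this]
    exact mul_pos_of_neg_of_neg hx2 hqx
  -- the minimum value is negative
  have hfts : f ts < 0 := by
    rcases le_or_gt m ts with h | h
    · rcases eq_or_lt_of_le h with h' | h'
      · rw [← h']; exact hfmf
      · exact (hanti (le_of_lt h' : m ≤ ts) Set.self_mem_Iic h').trans hfmf
    · exact (hmono ⟨le_rfl, hts0.le⟩ ⟨h.le, hm0.le⟩ h).trans hfmf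
  -- locate t1, t2 relative to ts
  have ht1ts : t1 < ts := by
    by_contra h
    push_neg at h
    have := hmono ⟨h, ht10.le⟩ ⟨h.trans ht1m.le, hm0.le⟩ ht1m
    rw [ht1r] at this
    linarith
  have ht2ts : ts < t2 := by
    by_contra h
    push_neg at h
    have := hanti (ht2m.le.trans h : m ≤ ts) h ht2m
    rw [ht2r] at this
    linarith
  refine ⟨t1, t2, ht10, ht20, ne_of_lt (ht1m.trans ht2m), ht1r, ht2r, ?_⟩
  intro τ hτ hroot
  have hroot' : f τ = 0 := hroot
  rcases le_or_gt τ ts with h | h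
  · left
    exact hanti.injOn h ht1ts.le (by rw [hroot', ht1r])
  · right
    exact hmono.injOn ⟨h.le, hτ.le⟩ ⟨ht2ts.le, ht20.le⟩ (by rw [hroot', ht2r])

/-- the characteristic quartic of the two-player
infinite-horizon system has exactly two distinct real roots in `(−∞,0)`. -/
theorem stmt_12 (lam gam sig a1 a2 : ℝ)
    (hlam : 0 < lam) (hgam : 0 ≤ gam) (hsig : 0 < sig)
    (ha1 : 0 < a1) (ha2 : 0 < a2) (hne : a1 ≠ a2) :
    ∃ t1 t2 : ℝ, t1 < 0 ∧ t2 < 0 ∧ t1 ≠ t2 ∧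
      (t1 ^ 4 - (2 * gam / (3 * lam)) * t1 ^ 3
        - ((gam ^ 2 + 2 * lam * sig ^ 2 * (a1 + a2)) / (3 * lam ^ 2)) * t1 ^ 2
        + sig ^ 4 * a1 * a2 / (3 * lam ^ 2) = 0) ∧
      (t2 ^ 4 - (2 * gam / (3 * lam)) * t2 ^ 3
        - ((gam ^ 2 + 2 * lam * sig ^ 2 * (a1 + a2)) / (3 * lam ^ 2)) * t2 ^ 2
        + sig ^ 4 * a1 * a2 / (3 * lam ^ 2) = 0) ∧
      (∀ τ : ℝ, τ < 0 →
        τ ^ 4 - (2 * gam / (3 * lam)) * τ ^ 3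
          - ((gam ^ 2 + 2 * lam * sig ^ 2 * (a1 + a2)) / (3 * lam ^ 2)) * τ ^ 2
          + sig ^ 4 * a1 * a2 / (3 * lam ^ 2) = 0 →
        τ = t1 ∨ τ = t2) := by
  -- the witness point where the quartic is negative
  set w : ℝ := sig * Real.sqrt (a1 + a2) / (2 * Real.sqrt lam) with hw
  have hw0 : 0 < w := by
    rw [hw]
    have h1 : 0 < Real.sqrt (a1 + a2) := Real.sqrt_pos.mpr (by linarith)
    have h2 : 0 < Real.sqrt lam := Real.sqrt_pos.mpr hlam
    positivity
  have hs1 : Real.sqrt (a1 + a2) ^ 2 = a1 + a2 := Real.sq_sqrt (by linarith)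
  have hs2 : Real.sqrt lam ^ 2 = lam := Real.sq_sqrt hlam.le
  have key : 4 * lam * w ^ 2 = sig ^ 2 * (a1 + a2) := by
    have h2 : Real.sqrt lam ≠ 0 := by positivity
    rw [hw]
    field_simp
    linear_combination 4 * lam * hs1 - 4 * (a1 + a2) * hs2
  have hane : 0 < (a1 - a2) ^ 2 := by
    have := sub_ne_zero.mpr hne
    positivity
  have k1 : 4 * lam ^ 2 * w ^ 4 = lam * w ^ 2 * (sig ^ 2 * (a1 + a2)) := by
    calc 4 * lam ^ 2 * w ^ 4 = lam * w ^ 2 * (4 * lam * w ^ 2) := by ring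
      _ = lam * w ^ 2 * (sig ^ 2 * (a1 + a2)) := by rw [key]
  have k2 : 16 * lam ^ 2 * w ^ 4 = (sig ^ 2 * (a1 + a2)) ^ 2 := by
    calc 16 * lam ^ 2 * w ^ 4 = (4 * lam * w ^ 2) ^ 2 := by ring
      _ = (sig ^ 2 * (a1 + a2)) ^ 2 := by rw [key]
  have hN : 3 * lam ^ 2 * w ^ 4 + 2 * lam * gam * w ^ 3
      - (gam ^ 2 + 2 * lam * sig ^ 2 * (a1 + a2)) * w ^ 2
      + sig ^ 4 * a1 * a2 < 0 := by
    nlinarith [sq_nonneg (gam * w - lam * w ^ 2), k1, k2,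
      mul_pos (pow_pos hsig 4) hane]
  have hfm : (-w) ^ 4 - (2 * gam / (3 * lam)) * (-w) ^ 3
      - ((gam ^ 2 + 2 * lam * sig ^ 2 * (a1 + a2)) / (3 * lam ^ 2)) * (-w) ^ 2
      + sig ^ 4 * a1 * a2 / (3 * lam ^ 2) < 0 := by
    have heq : (-w) ^ 4 - (2 * gam / (3 * lam)) * (-w) ^ 3
        - ((gam ^ 2 + 2 * lam * sig ^ 2 * (a1 + a2)) / (3 * lam ^ 2)) * (-w) ^ 2
        + sig ^ 4 * a1 * a2 / (3 * lam ^ 2)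
        = (3 * lam ^ 2 * w ^ 4 + 2 * lam * gam * w ^ 3
          - (gam ^ 2 + 2 * lam * sig ^ 2 * (a1 + a2)) * w ^ 2
          + sig ^ 4 * a1 * a2) / (3 * lam ^ 2) := by
      field_simp
      ring
    rw [heq]
    exact div_neg_of_neg_of_pos hN (by positivity)
  exact quartic_aux (2 * gam / (3 * lam))
    ((gam ^ 2 + 2 * lam * sig ^ 2 * (a1 + a2)) / (3 * lam ^ 2))
    (sig ^ 4 * a1 * a2 / (3 * lam ^ 2))
    (by positivity) (by positivity) (by positivity)
    (-w) (by linarith) hfm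
end
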